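/- Let p be an odd natural number and define the rational function g(t) = Re((t+i)^p)/Im((t+i)^p) for real t where the denominator is nonzero. Then g'(t) = p·(1+t²)^{p-1} / (Im((t+i)^p))². -/

import Mathlib

/-- The function `g(t) = Re((t+i)^p)/Im((t+i)^p)` (junk where the denominator
vanishes). -/
noncomputable def g5 (p : ℕ) : ℝ → ℝ :=
  fun t => (((t : ℂ) + Complex.I) ^ p).re / (((t : ℂ) + Complex.I) ^ p).im

/-!
By the quotient rule, the derivative of `Re F / Im F` for a curve `F : ℝ → ℂ` is
`Im (F · conj F') / (Im F)²`. For `F(s) = (s + i)^p` and `z = t + i` the numerator is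
`Im (z^p · p · conj z^(p-1)) = p · Im z · |z|^(2(p-1)) = p (1 + t²)^(p-1)`.
-/

open Complex ComplexConjugate

theorem HasDerivAt.re_div_im {F : ℝ → ℂ} {F' : ℂ} {t : ℝ} (hF : HasDerivAt F F' t)
    (h : (F t).im ≠ 0) :
    HasDerivAt (fun s => (F s).re / (F s).im) ((F t * conj F').im / (F t).im ^ 2) t := by
  have hre : HasDerivAt (fun s => (F s).re) F'.re t := reCLM.hasFDerivAt.comp_hasDerivAt t hF
  have him : HasDerivAt (fun s => (F s).im) F'.im t := imCLM.hasFDerivAt.comp_hasDerivAt t hF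
  refine (hre.div him h).congr_deriv ?_
  rw [mul_im, conj_re, conj_im]
  ring

theorem Complex.pow_mul_conj_natCast_mul_pow_pred (z : ℂ) (p : ℕ) :
    z ^ p * conj (p * z ^ (p - 1)) = p * z * (normSq z : ℂ) ^ (p - 1) := by
  cases p with
  | zero => simp
  | succ q =>
    simp only [map_mul, map_pow, map_natCast, Nat.add_sub_cancel, ← mul_conj, mul_pow]
    ring

theorem hasDerivAt_ofReal_add_I_pow (p : ℕ) (t : ℝ) :
    HasDerivAt (fun s : ℝ => ((s : ℂ) + I) ^ p) (p * ((t : ℂ) + I) ^ (p - 1)) t := by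
  simpa using (((hasDerivAt_id (t : ℂ)).add_const I).pow p).comp_ofReal

theorem stmt5_general (p : ℕ) (t : ℝ)
    (h : (((t : ℂ) + Complex.I) ^ p).im ≠ 0) :
    HasDerivAt (g5 p)
      ((p : ℝ) * (1 + t ^ 2) ^ (p - 1) / ((((t : ℂ) + Complex.I) ^ p).im) ^ 2)
      t := by
  refine ((hasDerivAt_ofReal_add_I_pow p t).re_div_im h).congr_deriv ?_
  rw [pow_mul_conj_natCast_mul_pow_pred, ← ofReal_pow, im_mul_ofReal]
  have hnormSq : normSq ((t : ℂ) + I) = 1 + t ^ 2 := by simp [normSq_apply]; ring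
  simp [hnormSq]

/-- For odd `p` and real `t` with `Im((t+i)^p) ≠ 0`, the function
`g(t) = Re((t+i)^p)/Im((t+i)^p)` satisfies
`g'(t) = p (1+t²)^{p−1} / Im((t+i)^p)²`. -/
theorem stmt5 (p : ℕ) (hp : Odd p) (t : ℝ)
    (h : (((t : ℂ) + Complex.I) ^ p).im ≠ 0) :
    HasDerivAt (g5 p)
      ((p : ℝ) * (1 + t ^ 2) ^ (p - 1) / ((((t : ℂ) + Complex.I) ^ p).im) ^ 2)
      t :=
  stmt5_general p t h
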